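/- Let p be a prime, A an F-finite Z_(p)-algebra, and B a finitely generated A-algebra. Then for every r ≥ 1, W_r(B) is a finitely generated W_r(A)-algebra, where the algebra structure is given by the ring homomorphism W_r(A) → W_r(B) induced functorially by the structure map A → B. -/

import Mathlib

/-- A commutative ring `B` is `F`-finite (with respect to the prime `p`) if the `p`-th power
map is a ring endomorphism making `B` into a finitely generated module over itself via
restriction of scalars along it. -/
def IsFFinite (p : ℕ) (B : Type*) [CommRing B] : Prop :=
  ∃ f : B →+* B, (∀ x : B, f x = x ^ p) ∧ f.Finite

/-- Functoriality of truncated Witt vectors: a ring homomorphism `f : R →+* S` induces a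
ring homomorphism `W_n(R) →+* W_n(S)`. -/
noncomputable def truncatedWittMap (p : ℕ) [Fact p.Prime] (n : ℕ) {R S : Type*}
    [CommRing R] [CommRing S] (f : R →+* S) :
    TruncatedWittVector p n R →+* TruncatedWittVector p n S :=
  RingHom.liftOfRightInverse (WittVector.truncate n) TruncatedWittVector.out
    TruncatedWittVector.truncateFun_out
    ⟨(WittVector.truncate n).comp (WittVector.map f), by
      intro x hx
      rw [WittVector.mem_ker_truncate] at hx
      rw [RingHom.mem_ker]
      ext i
      simp only [RingHom.comp_apply, WittVector.coeff_truncate, WittVector.map_coeff,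
        TruncatedWittVector.coeff_zero]
      rw [hx i i.isLt, map_zero]⟩

/-!
For a subring `T` of `W(B)` containing `V^{k+1} W(B)`, the `b ∈ B` with `V^k [b] ∈ T` form a
module over the subring `w_k(T)` of `B`, because modulo `V^{k+1}` one has
`V^k [b] + V^k [c] ≡ V^k [b + c]` and `V^k [b] * y = V^k ([b] * F^k y) ≡ V^k [b * w_k(y)]`; and
`T ⊇ V^k W(B)` as soon as all these `V^k [b]` lie in `T`. Take for `T` the preimage of the
`W_r(A)`-subalgebra of `W_r(B)` generated by finitely many elements; by descending induction on `k`
it suffices that `B` is spanned over `w_k(T)` by finitely many `c` with `V^k [c] ∈ T`.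
Now `w_k(T)` contains `x^{p^k}` for generators `x` of `B`, and `a^{p^k} = w_k [a]` and
`p^k a = w_k (V^k [a])` for `a ∈ A`. Writing `A = ∑ A^{p^k} d + p A` with finitely many `d`
(F-finiteness of `A/p`) and iterating `k` times, `B` is spanned over `w_k(T)` by the products of
`1` or some `d` with the monomials in the generators of exponents `< p^k`.
-/

open WittVector Function Pointwise

namespace WittVector

variable {p : ℕ} [Fact p.Prime] {R S : Type*} [CommRing R] [CommRing S]

theorem ghostComponent_zero_apply (x : WittVector p R) : ghostComponent 0 x = x.coeff 0 := by
  rw [ghostComponent_apply, wittPolynomial_zero, MvPolynomial.aeval_X]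

theorem coeff_zero_iterate_frobenius (k : ℕ) (x : WittVector p R) :
    (frobenius^[k] x).coeff 0 = ghostComponent k x := by
  induction k generalizing x with
  | zero => exact (ghostComponent_zero_apply x).symm
  | succ k ih => rw [iterate_succ_apply, ih, ghostComponent_frobenius]

theorem ghostComponent_add_iterate_verschiebung (n k : ℕ) (x : WittVector p R) :
    ghostComponent (n + k) (verschiebung^[k] x) = (p : R) ^ k * ghostComponent n x := by
  induction k with
  | zero => simp
  | succ k ih =>
    rw [iterate_succ_apply', ← add_assoc, ghostComponent_verschiebung, ih, pow_succ', mul_assoc]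

theorem ghostComponent_map (f : R →+* S) (n : ℕ) (x : WittVector p R) :
    ghostComponent n (map f x) = f (ghostComponent n x) := by
  simp only [ghostComponent_apply, aeval_wittPolynomial, map_sum, map_mul, map_pow, map_natCast,
    map_coeff]

theorem iterate_verschiebung_sub_teichmuller_mem_ker (k : ℕ) (y : WittVector p R) :
    verschiebung^[k] y - verschiebung^[k] (teichmuller p (y.coeff 0)) ∈
      RingHom.ker (truncate (p := p) (k + 1)) := by
  rw [← iterate_map_sub, mem_ker_truncate]
  intro i hi
  rcases Nat.lt_succ_iff_lt_or_eq.1 hi with hi | rfl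
  · exact iterate_verschiebung_coeff_eq_zero _ hi
  · have h := iterate_verschiebung_coeff (y - teichmuller p (y.coeff 0)) i 0
    rw [zero_add] at h
    rw [h, ← constantCoeff_apply, map_sub, constantCoeff_apply, constantCoeff_apply,
      teichmuller_coeff_zero, sub_self]

section Filtration

variable {T : Subring (WittVector p R)} {k : ℕ}

theorem iterate_verschiebung_teichmuller_mem_iff
    (hT : (RingHom.ker (truncate (p := p) (R := R) (k + 1)) : Set (WittVector p R)) ⊆ T)
    (y : WittVector p R) :
    verschiebung^[k] (teichmuller p (y.coeff 0)) ∈ T ↔ verschiebung^[k] y ∈ T := by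
  have hd := hT (iterate_verschiebung_sub_teichmuller_mem_ker k y)
  constructor
  · intro h
    simpa only [sub_add_cancel] using add_mem hd h
  · intro h
    simpa only [sub_sub_cancel] using sub_mem h hd

variable (T k) in
def verschiebungTeichmullerSubmodule
    (hT : (RingHom.ker (truncate (p := p) (R := R) (k + 1)) : Set (WittVector p R)) ⊆ T) :
    Submodule (T.map (ghostComponent (p := p) (R := R) k)) R where
  carrier := {b | verschiebung^[k] (teichmuller p b) ∈ T}
  zero_mem' := by simp [teichmuller_zero, iterate_map_zero]
  add_mem' {b c} hb hc := by
    have hbc : b + c = (teichmuller p b + teichmuller p c).coeff 0 := by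
      rw [add_coeff_zero, teichmuller_coeff_zero, teichmuller_coeff_zero]
    rw [Set.mem_ofPred_eq, hbc, iterate_verschiebung_teichmuller_mem_iff hT, iterate_map_add]
    exact add_mem hb hc
  smul_mem' := by
    rintro ⟨_, x, hx, rfl⟩ b hb
    have hxb : ghostComponent k x * b = (teichmuller p b * frobenius^[k] x).coeff 0 := by
      rw [mul_coeff_zero, teichmuller_coeff_zero, coeff_zero_iterate_frobenius, mul_comm]
    show verschiebung^[k] (teichmuller p (ghostComponent k x * b)) ∈ T
    rw [hxb, iterate_verschiebung_teichmuller_mem_iff hT, ← iterate_verschiebung_mul_left]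
    exact mul_mem hb hx

theorem iterate_verschiebung_teichmuller_mem_of_span_eq_top
    (hT : (RingHom.ker (truncate (p := p) (R := R) (k + 1)) : Set (WittVector p R)) ⊆ T) {s : Set R}
    (hs : Submodule.span (T.map (ghostComponent (p := p) (R := R) k)) s = (⊤ : Submodule _ R))
    (hsT : ∀ c ∈ s, verschiebung^[k] (teichmuller p c) ∈ T) (b : R) :
    verschiebung^[k] (teichmuller p b) ∈ T := by
  have htop : verschiebungTeichmullerSubmodule T k hT = ⊤ :=
    top_unique (hs ▸ Submodule.span_le.2 hsT)
  show b ∈ verschiebungTeichmullerSubmodule T k hT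
  rw [htop]
  trivial

theorem ker_truncate_subset_of_iterate_verschiebung_teichmuller_mem
    (hT : (RingHom.ker (truncate (p := p) (R := R) (k + 1)) : Set (WittVector p R)) ⊆ T)
    (hV : ∀ b : R, verschiebung^[k] (teichmuller p b) ∈ T) :
    (RingHom.ker (truncate (p := p) (R := R) k) : Set (WittVector p R)) ⊆ T := by
  intro x hx
  rw [SetLike.mem_coe, mem_ker_truncate] at hx
  rw [SetLike.mem_coe, eq_iterate_verschiebung hx, ← iterate_verschiebung_teichmuller_mem_iff hT]
  exact hV _

theorem eq_top_of_forall_iterate_verschiebung_teichmuller_mem {r : ℕ}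
    (hT : (RingHom.ker (truncate (p := p) (R := R) r) : Set (WittVector p R)) ⊆ T)
    (hV : ∀ k < r, (RingHom.ker (truncate (p := p) (R := R) (k + 1)) : Set (WittVector p R)) ⊆ T →
      ∀ b : R, verschiebung^[k] (teichmuller p b) ∈ T) :
    T = ⊤ := by
  have h0 : (RingHom.ker (truncate (p := p) (R := R) 0) : Set (WittVector p R)) ⊆ T := by
    refine Nat.decreasingInduction (n := r)
      (motive := fun k _ => (RingHom.ker (truncate (p := p) (R := R) k) : Set (WittVector p R)) ⊆ T)
      (fun k hk hsucc => ?_) hT (Nat.zero_le r)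
    exact ker_truncate_subset_of_iterate_verschiebung_teichmuller_mem hsucc (hV k hk hsucc)
  exact eq_top_iff.2 fun x _ => h0 ((mem_ker_truncate 0 x).2 fun i hi => absurd hi i.not_lt_zero)

end Filtration

end WittVector

theorem RingHom.Finite.exists_finset_forall_eq_sum {R S : Type*} [CommRing R] [CommRing S]
    {f : R →+* S} (hf : f.Finite) : ∃ s : Finset S, ∀ y, ∃ c : S → R, ∑ i ∈ s, f (c i) * i = y := by
  let _ := f.toAlgebra
  obtain ⟨s, hs⟩ := hf.fg_top
  exact ⟨s, fun y => (Submodule.mem_span_finset.1 (hs ▸ Submodule.mem_top)).imp fun c hc => hc.2⟩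

theorem IsFFinite.exists_finset_forall_eq_sum_pow {p : ℕ} {Q : Type*} [CommRing Q]
    (h : IsFFinite p Q) (k : ℕ) :
    ∃ s : Finset Q, ∀ y, ∃ c : Q → Q, ∑ i ∈ s, c i ^ p ^ k * i = y := by
  obtain ⟨F, hF, hFfin⟩ := h
  have hFk : ∀ k x, (F ^ k) x = x ^ p ^ k := by
    intro k x
    induction k with
    | zero => simp
    | succ k ih =>
      rw [pow_succ', RingHom.mul_def, RingHom.comp_apply, ih, hF, ← pow_mul, ← pow_succ]
  have hFkfin : (F ^ k).Finite := by
    induction k with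
    | zero => exact RingHom.Finite.id Q
    | succ k ih => rw [pow_succ, RingHom.mul_def]; exact ih.comp hFfin
  simpa only [hFk] using hFkfin.exists_finset_forall_eq_sum

theorem IsFFinite.exists_finset_forall_eq_sum_pow_add {p : ℕ} {A : Type*} [CommRing A]
    (h : IsFFinite p (A ⧸ Ideal.span {(p : A)})) (k : ℕ) :
    ∃ D : Finset A, ∀ a, ∃ c : A → A, ∃ a', a = ∑ d ∈ D, c d ^ p ^ k * d + p * a' := by
  classical
  let π := Ideal.Quotient.mk (Ideal.span {(p : A)})
  let σ := surjInv (Ideal.Quotient.mk_surjective (I := Ideal.span {(p : A)}))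
  obtain ⟨s, hs⟩ := h.exists_finset_forall_eq_sum_pow k
  refine ⟨s.image σ, fun a => ?_⟩
  obtain ⟨c, hc⟩ := hs (π a)
  have hmem : a - ∑ d ∈ s.image σ, σ (c (π d)) ^ p ^ k * d ∈ Ideal.span {(p : A)} := by
    rw [← Ideal.Quotient.eq_zero_iff_mem, map_sub, map_sum,
      Finset.sum_image fun x _ y _ h => injective_surjInv _ h, sub_eq_zero, ← hc]
    simp only [map_mul, map_pow, π, σ, surjInv_eq]
  obtain ⟨a', ha'⟩ := Ideal.mem_span_singleton'.1 hmem
  exact ⟨fun d => σ (c (π d)), a', by linear_combination -ha'⟩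

section SubringSpan

variable {B : Type*} [CommRing B]

def boundedMonomials (xs : Finset B) (n : ℕ) : Set B :=
  Set.range fun e : xs → Fin n => ∏ x : xs, (x : B) ^ (e x : ℕ)

theorem mem_span_boundedMonomials {R : Subring B} {xs : Finset B} {n : ℕ} (hn : 0 < n)
    (hx : ∀ x ∈ xs, x ^ n ∈ R) {μ : B} (hμ : μ ∈ Submonoid.closure (xs : Set B)) :
    μ ∈ Submodule.span R (boundedMonomials xs n) := by
  obtain ⟨e, rfl⟩ := Submonoid.mem_closure_finset'.1 hμ
  have hsplit : ∏ x : xs, (x : B) ^ e x =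
      (∏ x : xs, ((x : B) ^ n) ^ (e x / n)) * ∏ x : xs, (x : B) ^ (e x % n) := by
    rw [← Finset.prod_mul_distrib]
    refine Finset.prod_congr rfl fun x _ => ?_
    rw [← pow_mul, ← pow_add, Nat.div_add_mod]
  have hpow : ∏ x : xs, ((x : B) ^ n) ^ (e x / n) ∈ R :=
    prod_mem fun x _ => pow_mem (hx x x.2) _
  rw [hsplit]
  exact Submodule.smul_mem _ (⟨_, hpow⟩ : R)
    (Submodule.subset_span ⟨fun x => ⟨e x % n, Nat.mod_lt _ hn⟩, rfl⟩)

theorem span_mul_boundedMonomials_eq_top {A : Type*} [CommRing A] [Algebra A B] {xs : Finset B}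
    (hxs : Algebra.adjoin A (xs : Set B) = ⊤) {n : ℕ} (hn : 0 < n) {R : Subring B}
    (hx : ∀ x ∈ xs, x ^ n ∈ R) {E : Set B} (hA : ∀ a, algebraMap A B a ∈ Submodule.span R E) :
    Submodule.span R (E * boundedMonomials xs n) = ⊤ := by
  rw [eq_top_iff]
  rintro b -
  have hb : b ∈ Submodule.span A (Submonoid.closure (xs : Set B) : Set B) := by
    rw [← Algebra.adjoin_eq_span, hxs]
    trivial
  suffices ∀ a, algebraMap A B a * b ∈ Submodule.span R (E * boundedMonomials xs n) by
    simpa using this 1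
  induction hb using Submodule.span_induction with
  | mem μ hμ =>
    intro a
    rw [← Submodule.span_mul_span]
    exact Submodule.mul_mem_mul (hA a) (mem_span_boundedMonomials hn hx hμ)
  | zero => simp
  | add x y _ _ hx hy => intro a; rw [mul_add]; exact add_mem (hx a) (hy a)
  | smul a' x _ hx => intro a; rw [Algebra.smul_def, ← mul_assoc, ← map_mul]; exact hx _

theorem apply_mem_span_insert_one_of_forall_eq_sum_pow_add {A : Type*} [CommRing A] (f : A →+* B)
    {q n : ℕ} {π : A} {D : Finset A}
    (hD : ∀ a, ∃ c : A → A, ∃ a', a = ∑ d ∈ D, c d ^ q * d + π * a')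
    {R : Subring B} (hpow : ∀ a, f a ^ q ∈ R) (hπ : f π ∈ R) (hπn : ∀ a, f π ^ n * f a ∈ R)
    (a : A) : f a ∈ Submodule.span R (insert 1 (f '' D)) := by
  set M := Submodule.span R (insert 1 (f '' D))
  have hstep : ∀ a, ∃ m ∈ M, ∃ a', f a = m + f π * f a' := by
    intro a
    obtain ⟨c, a', rfl⟩ := hD a
    refine ⟨∑ d ∈ D, f (c d) ^ q * f d, sum_mem fun d hd => M.smul_mem ⟨_, hpow (c d)⟩
      (Submodule.subset_span (Set.mem_insert_of_mem _ (Set.mem_image_of_mem f hd))), a', ?_⟩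
    simp only [map_add, map_sum, map_mul, map_pow]
  have hiter : ∀ j a, ∃ m ∈ M, ∃ a', f a = m + f π ^ j * f a' := by
    intro j
    induction j with
    | zero => exact fun a => ⟨0, zero_mem _, a, by simp⟩
    | succ j ih =>
      intro a
      obtain ⟨m, hm, a', ha⟩ := ih a
      obtain ⟨m', hm', a'', ha'⟩ := hstep a'
      exact ⟨m + f π ^ j * m', add_mem hm (M.smul_mem ⟨_, pow_mem hπ j⟩ hm'), a'',
        by rw [ha, ha']; ring⟩
  obtain ⟨m, hm, a', ha⟩ := hiter n a
  rw [ha]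
  have hπna : f π ^ n * f a' ∈ M := by
    simpa [Subring.smul_def] using
      M.smul_mem ⟨_, hπn a'⟩ (Submodule.subset_span (Set.mem_insert 1 _))
  exact add_mem hm hπna

end SubringSpan

theorem truncatedWittMap_truncate {p : ℕ} [Fact p.Prime] {n : ℕ} {R S : Type*} [CommRing R]
    [CommRing S] (f : R →+* S) (w : WittVector p R) :
    truncatedWittMap p n f (WittVector.truncate n w) = WittVector.truncate n (WittVector.map f w) :=
  RingHom.liftOfRightInverse_comp_apply _ _ _ _ _

namespace WittVector

variable {p : ℕ} [hp : Fact p.Prime] {A B : Type*} [CommRing A] [CommRing B] [Algebra A B]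

variable (p) in
def truncatedWittGenerators (xs : Finset B) (D : ℕ → Finset A) (r : ℕ) : Set (WittVector p B) :=
  teichmuller p '' xs ∪ ⋃ k < r, (fun c => verschiebung^[k] (teichmuller p c)) ''
    (insert 1 (algebraMap A B '' D k) * boundedMonomials xs (p ^ k))

theorem truncatedWittGenerators_finite (xs : Finset B) (D : ℕ → Finset A) (r : ℕ) :
    (truncatedWittGenerators p xs D r).Finite :=
  (xs.finite_toSet.image _).union <| (Set.finite_lt_nat r).biUnion fun k _ =>
    ((((D k).finite_toSet.image _).insert 1).mul (Set.finite_range _)).image _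

theorem subring_eq_top_of_truncatedWittGenerators_subset {xs : Finset B}
    (hxs : Algebra.adjoin A (xs : Set B) = ⊤) {D : ℕ → Finset A}
    (hD : ∀ k a, ∃ c : A → A, ∃ a', a = ∑ d ∈ D k, c d ^ p ^ k * d + p * a') {r : ℕ}
    {T : Subring (WittVector p B)}
    (hker : (RingHom.ker (truncate (p := p) (R := B) r) : Set (WittVector p B)) ⊆ T)
    (hmap : ∀ w : WittVector p A, map (algebraMap A B) w ∈ T)
    (hG : truncatedWittGenerators p xs D r ⊆ T) : T = ⊤ := by
  refine eq_top_of_forall_iterate_verschiebung_teichmuller_mem hker fun k hk hkerk => ?_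
  set R := T.map (ghostComponent (p := p) (R := B) k)
  have hghost (w : WittVector p A) : algebraMap A B (ghostComponent k w) ∈ R :=
    ⟨_, hmap w, ghostComponent_map _ _ _⟩
  have hpow (a : A) : algebraMap A B a ^ p ^ k ∈ R := by
    simpa [ghostComponent_teichmuller] using hghost (teichmuller p a)
  have hpow_mul (a : A) : algebraMap A B p ^ k * algebraMap A B a ∈ R := by
    have h := ghostComponent_add_iterate_verschiebung 0 k (teichmuller p a)
    rw [zero_add, ghostComponent_teichmuller, pow_zero, pow_one] at h
    simpa [h] using hghost (verschiebung^[k] (teichmuller p a))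
  have hp_mem : algebraMap A B p ∈ R := by
    rw [map_natCast]
    exact natCast_mem R p
  have hxs_pow (x : B) (hx : x ∈ xs) : x ^ p ^ k ∈ R :=
    ⟨_, hG (Or.inl ⟨x, hx, rfl⟩), ghostComponent_teichmuller _ _ _⟩
  refine iterate_verschiebung_teichmuller_mem_of_span_eq_top hkerk
    (span_mul_boundedMonomials_eq_top hxs (pow_pos hp.out.pos k) hxs_pow
      (apply_mem_span_insert_one_of_forall_eq_sum_pow_add _ (hD k) hpow hp_mem hpow_mul))
    fun c hc => hG (Or.inr (Set.mem_biUnion hk ⟨c, hc, rfl⟩))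

end WittVector

open WittVector in
theorem truncatedWittVector_finiteType_general (p : ℕ) [Fact p.Prime]
    (A : Type*) [CommRing A]
    (hFF : IsFFinite p (A ⧸ Ideal.span {(p : A)}))
    (B : Type*) [CommRing B] [Algebra A B] (hB : Algebra.FiniteType A B)
    (r : ℕ) :
    (truncatedWittMap p r (algebraMap A B)).FiniteType := by
  obtain ⟨xs, hxs⟩ := hB.out
  choose D hD using hFF.exists_finset_forall_eq_sum_pow_add
  let _ := (truncatedWittMap p r (algebraMap A B)).toAlgebra
  have hG := (truncatedWittGenerators_finite (p := p) xs D r).image (truncate r)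
  set S := Algebra.adjoin (TruncatedWittVector p r A)
    (hG.toFinset : Set (TruncatedWittVector p r B))
  have hT : S.toSubring.comap (truncate r) = ⊤ := by
    refine subring_eq_top_of_truncatedWittGenerators_subset hxs hD (fun x hx => ?_) (fun w => ?_)
      fun x hx => Algebra.subset_adjoin (by simpa using Set.mem_image_of_mem _ hx)
    · simp [(RingHom.mem_ker).1 hx]
    · have h := S.algebraMap_mem (truncate r w)
      rwa [RingHom.algebraMap_toAlgebra, truncatedWittMap_truncate] at h
  refine ⟨⟨hG.toFinset, eq_top_iff.2 fun z _ => ?_⟩⟩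
  obtain ⟨w, rfl⟩ := truncate_surjective p r B z
  exact (hT ▸ Subring.mem_top w : w ∈ S.toSubring.comap (truncate r))

/-- (Langer–Zink) Let `A` be an F-finite `ℤ_(p)`-algebra (every prime `q ≠ p` is invertible
in `A`, and `A/pA` is F-finite), and `B` a finitely generated `A`-algebra.  Then for every
`r ≥ 1`, `W_r(B)` is a finitely generated `W_r(A)`-algebra, via the ring homomorphism
`W_r(A) → W_r(B)` induced functorially by the structure map `A → B`. -/
theorem truncatedWittVector_finiteType (p : ℕ) [Fact p.Prime]
    (A : Type*) [CommRing A]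
    (hZp : ∀ q : ℕ, q.Prime → q ≠ p → IsUnit (q : A))
    (hFF : IsFFinite p (A ⧸ Ideal.span {(p : A)}))
    (B : Type*) [CommRing B] [Algebra A B] (hB : Algebra.FiniteType A B)
    (r : ℕ) (hr : 1 ≤ r) :
    (truncatedWittMap p r (algebraMap A B)).FiniteType :=
  truncatedWittVector_finiteType_general p A hFF B hB r
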